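/- arXiv:math/9912233 — 3 statements merged into one kernel-verified Lean document; each statement's English description precedes it below -/
import Mathlib

section
/- Let G be a locally finite infinite connected graph. Then G is transient if and only if for every proper metric d₀ on the vertex set of G (i.e., a metric in which every ball of finite radius contains finitely many vertices), the sum over all edges [u,v] of d₀(u,v)² is infinite. -/
open scoped ENNReal

noncomputable section

/-- The Dirichlet energy `Σ_{[u,v] ∈ E(G)} (f(u) − f(v))²` of `f : V(G) → ℝ`,
as a sum over the (unordered) edges of `G`, valued in `[0,∞]`. -/
def dirichletEnergy {V : Type*} (G : SimpleGraph V) (f : V → ℝ) : ℝ≥0∞ :=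
  ∑' e : G.edgeSet,
    ENNReal.ofReal (Sym2.lift ⟨fun u v => (f u - f v) ^ 2, fun u v => by ring⟩ (e : Sym2 V))

/-- The sum `Σ_{[u,v] ∈ E(G)} d₀(u,v)²` over the (unordered) edges of `G`, valued in
`[0,∞]`.  (The symmetrization `max (d₀ u v) (d₀ v u)` is used only to descend to
unordered pairs; for a symmetric `d₀` it is exactly `d₀ u v`.) -/
def edgeSumSq {V : Type*} (G : SimpleGraph V) (d₀ : V → V → ℝ) : ℝ≥0∞ :=
  ∑' e : G.edgeSet,
    ENNReal.ofReal
      ((Sym2.lift ⟨fun u v => max (d₀ u v) (d₀ v u), fun u v => max_comm _ _⟩ (e : Sym2 V)) ^ 2)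

/-- A function `f : V → ℝ` is proper if the preimage of every compact set is finite. -/
def ProperFun {V : Type*} (f : V → ℝ) : Prop :=
  ∀ K : Set ℝ, IsCompact K → (f ⁻¹' K).Finite

/-- `d₀` is a proper metric on `V`: a metric in which every ball of finite radius
contains finitely many points. -/
def IsProperMetric {V : Type*} (d₀ : V → V → ℝ) : Prop :=
  (∀ u v, d₀ u v = 0 ↔ u = v) ∧
  (∀ u v, d₀ u v = d₀ v u) ∧
  (∀ u v w, d₀ u w ≤ d₀ u v + d₀ v w) ∧
  (∀ (v : V) (r : ℝ), {u : V | d₀ v u ≤ r}.Finite)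

/-- a locally finite infinite connected graph `G` is transient if and only
if every proper metric `d₀` on its vertex set satisfies `Σ_{[u,v]∈E(G)} d₀(u,v)² = ∞`.

By standard electrical network theory (Doyle–Snell), `G` is recurrent iff there exists a
proper nonnegative function `f` on the vertices with finite Dirichlet energy; transience
is formalized as the negation of this. -/
theorem transient_iff_proper_metrics_not_square_summable
    {V : Type*} [Infinite V] (G : SimpleGraph V)
    (hconn : G.Connected) (hlf : ∀ v : V, (G.neighborSet v).Finite) :
    (¬ ∃ f : V → ℝ, (∀ v, 0 ≤ f v) ∧ ProperFun f ∧ dirichletEnergy G f < ⊤) ↔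
      ∀ d₀ : V → V → ℝ, IsProperMetric d₀ → edgeSumSq G d₀ = ⊤ := by
  classical
  constructor
  · -- transient → every proper metric has infinite edge sum
    intro htrans d₀ hd₀
    obtain ⟨hzero, hsymm, htri, hball⟩ := hd₀
    have hnn : ∀ u v, 0 ≤ d₀ u v := by
      intro u v
      have h1 := htri u v u
      have h2 := (hzero u u).mpr rfl
      have h3 := hsymm u v
      linarith
    by_contra hfin
    obtain ⟨v₀⟩ : Nonempty V := inferInstance
    refine htrans ⟨fun v => d₀ v₀ v, fun v => hnn v₀ v, ?_, ?_⟩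
    · intro K hK
      obtain ⟨r, hr⟩ := hK.isBounded.subset_closedBall 0
      refine (hball v₀ r).subset ?_
      intro u hu
      have h1 : |d₀ v₀ u| ≤ r := by
        simpa [Real.dist_eq] using hr hu
      exact (abs_le.mp h1).2
    · refine lt_of_le_of_lt (ENNReal.tsum_le_tsum fun e => ?_) (lt_top_iff_ne_top.mpr hfin)
      obtain ⟨e, he⟩ := e
      induction e using Sym2.inductionOn with
      | hf u v =>
        simp only [Sym2.lift_mk]
        apply ENNReal.ofReal_le_ofReal
        have h1 : d₀ v₀ u ≤ d₀ v₀ v + d₀ u v := by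
          have := htri v₀ v u
          have h3 := hsymm v u
          linarith
        have h2 : d₀ v₀ v ≤ d₀ v₀ u + d₀ u v := htri v₀ u v
        have h3 : max (d₀ u v) (d₀ v u) = d₀ u v := by rw [← hsymm u v, max_self]
        rw [h3]
        nlinarith [hnn u v]
  · -- every proper metric infinite → transient
    intro hall
    rintro ⟨f, hf0, hfprop, hfen⟩
    -- V is countable
    have hcV : Countable V := by
      rw [← Set.countable_univ_iff]
      have hcov : (Set.univ : Set V) ⊆ ⋃ n : ℕ, f ⁻¹' Set.Icc (-(n : ℝ)) n := by
        intro v _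
        refine Set.mem_iUnion.2 ⟨⌈f v⌉₊, ?_⟩
        simp only [Set.mem_preimage, Set.mem_Icc]
        exact ⟨le_trans (neg_nonpos.2 (Nat.cast_nonneg _)) (hf0 v), Nat.le_ceil _⟩
      exact (Set.countable_iUnion fun n =>
        (hfprop _ isCompact_Icc).countable).mono hcov
    obtain ⟨e⟩ : Nonempty (ℕ ≃ V) := nonempty_equiv_of_countable
    -- degrees and the decreasing sequence ε
    set D : V → ℕ := fun v => Nat.card (G.neighborSet v) with hDdef
    set M : ℕ → ℕ := fun n => ((Finset.range (n + 1)).sup fun m => D (e m)) + 1 with hMdef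
    have hM1 : ∀ n, 1 ≤ M n := fun n => Nat.le_add_left 1 _
    have hMmono : Monotone M := by
      intro a b hab
      exact Nat.add_le_add_right
        (Finset.sup_mono (Finset.range_subset_range.2 (Nat.add_le_add_right hab 1))) 1
    have hDM : ∀ n, D (e n) ≤ M n := fun n =>
      le_trans (Finset.le_sup (f := fun m => D (e m)) (Finset.self_mem_range_succ n))
        (Nat.le_succ _)
    have hMpos : ∀ n, (0 : ℝ) < (M n : ℝ) := fun n => by
      exact_mod_cast Nat.lt_of_lt_of_le Nat.zero_lt_one (hM1 n)
    set ε : ℕ → ℝ := fun n => (1 / 2 : ℝ) ^ n / (M n : ℝ) with hεdef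
    have hεpos : ∀ n, 0 < ε n := fun n => by
      have := hMpos n; positivity
    have hεanti : StrictAnti ε := by
      apply strictAnti_nat_of_succ_lt
      intro n
      have h1 := hMpos n
      have h2 := hMpos (n + 1)
      have h3 : (M n : ℝ) ≤ (M (n + 1) : ℝ) := by exact_mod_cast hMmono (Nat.le_succ n)
      rw [hεdef]
      simp only
      rw [div_lt_div_iff₀ h2 h1]
      have hp : (0 : ℝ) < (1 / 2 : ℝ) ^ n := by positivity
      have : ((1 : ℝ) / 2) ^ (n + 1) = (1 / 2) ^ n * (1 / 2) := pow_succ _ _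
      nlinarith
    have hε1 : ∀ n, ε n ≤ 1 := by
      intro n
      rw [hεdef]
      simp only
      rw [div_le_one (hMpos n)]
      calc ((1:ℝ)/2) ^ n ≤ 1 := pow_le_one₀ (by norm_num) (by norm_num)
        _ ≤ (M n : ℝ) := by exact_mod_cast hM1 n
    -- choose t avoiding the countable bad set
    set S : Set ℝ :=
      Set.range (fun p : ℕ × ℕ => (f (e p.2) - f (e p.1)) / (ε p.1 - ε p.2)) with hSdef
    have hSc : S.Countable := Set.countable_range _
    have hex : ∃ t, t ∈ Set.Ioc (0 : ℝ) 1 ∧ t ∉ S := by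
      by_contra hcon
      push_neg at hcon
      have hsub : Set.Ioc (0 : ℝ) 1 ⊆ S := fun t ht => hcon t ht
      have := (hSc.mono hsub).measure_zero MeasureTheory.volume
      rw [Real.volume_Ioc] at this
      norm_num at this
    obtain ⟨t, ⟨ht0, ht1⟩, htS⟩ := hex
    set η : V → ℝ := fun v => t * ε (e.symm v) with hηdef
    set h : V → ℝ := fun v => f v + η v with hhdef
    -- h is injective
    have hinj : Function.Injective h := by
      intro u v huv
      by_contra hne
      have hmn : e.symm u ≠ e.symm v := fun hmn => hne (e.symm.injective hmn)
      have hεne : ε (e.symm u) - ε (e.symm v) ≠ 0 :=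
        sub_ne_zero.2 (fun hh => hmn (hεanti.injective hh))
      have huv' : f u + t * ε (e.symm u) = f v + t * ε (e.symm v) := huv
      have ht' : t = (f v - f u) / (ε (e.symm u) - ε (e.symm v)) := by
        field_simp
        linarith
      apply htS
      refine ⟨(e.symm u, e.symm v), ?_⟩
      simp only [Equiv.apply_symm_apply]
      exact ht'.symm
    have hηb : ∀ v, 0 < η v ∧ η v ≤ 1 := by
      intro v
      constructor
      · exact mul_pos ht0 (hεpos _)
      · calc t * ε (e.symm v) ≤ 1 * 1 :=
            mul_le_mul ht1 (hε1 _) (hεpos _).le (by norm_num)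
          _ = 1 := by norm_num
    -- h is proper
    have hhprop : ProperFun h := by
      intro K hK
      obtain ⟨r, hr⟩ := hK.isBounded.subset_closedBall 0
      refine (hfprop (Set.Icc (-(r + 1)) (r + 1)) isCompact_Icc).subset ?_
      intro v hv
      have h1 : |h v| ≤ r := by simpa [Real.dist_eq] using hr hv
      have h2 := abs_le.mp h1
      have h3 := hηb v
      simp only [Set.mem_preimage, Set.mem_Icc]
      constructor
      · have := h2.1
        rw [hhdef] at this
        simp only at this
        linarith [h3.1, h3.2]
      · have := h2.2
        rw [hhdef] at this
        simp only at this
        linarith [h3.1, h3.2]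
    -- the metric
    set d₀ : V → V → ℝ := fun u v => |h u - h v| with hd₀def
    have hmetric : IsProperMetric d₀ := by
      refine ⟨?_, ?_, ?_, ?_⟩
      · intro u v
        constructor
        · intro huv
          exact hinj (sub_eq_zero.mp (abs_eq_zero.mp huv))
        · rintro rfl; simp [hd₀def]
      · intro u v; exact abs_sub_comm _ _
      · intro u v w; exact abs_sub_le _ _ _
      · intro v r
        refine (hhprop (Set.Icc (h v - r) (h v + r)) isCompact_Icc).subset ?_
        intro u hu
        simp only [Set.mem_setOf_eq, hd₀def] at hu
        have := abs_le.mp hu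
        simp only [Set.mem_preimage, Set.mem_Icc]
        constructor <;> linarith [this.1, this.2]
    -- the edge sum of d₀² is finite, contradiction
    refine absurd (hall d₀ hmetric) (lt_top_iff_ne_top.mp ?_)
    set Lf : G.edgeSet → ℝ≥0∞ := fun e' =>
      ENNReal.ofReal
        (2 * Sym2.lift ⟨fun u v => (f u - f v) ^ 2, fun u v => by ring⟩ (e' : Sym2 V)) with hLf
    set Lη : G.edgeSet → ℝ≥0∞ := fun e' =>
      ENNReal.ofReal
        (Sym2.lift ⟨fun u v => 4 * η u ^ 2 + 4 * η v ^ 2, fun u v => by ring⟩ (e' : Sym2 V))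
      with hLη
    have hsplit : edgeSumSq G d₀ ≤ (∑' e', Lf e') + (∑' e', Lη e') := by
      rw [← ENNReal.tsum_add]
      unfold edgeSumSq
      refine ENNReal.tsum_le_tsum fun e' => ?_
      obtain ⟨e', he'⟩ := e'
      induction e' using Sym2.inductionOn with
      | hf u v =>
        simp only [hLf, hLη, hd₀def, Sym2.lift_mk]
        rw [← ENNReal.ofReal_add (by positivity) (by positivity)]
        apply ENNReal.ofReal_le_ofReal
        have h1 : max |h u - h v| |h v - h u| = |h u - h v| := by
          rw [abs_sub_comm (h v) (h u), max_self]
        rw [h1, sq_abs]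
        have h2 : h u - h v = (f u - f v) + (η u - η v) := by
          simp only [hhdef]; ring
        rw [h2]
        nlinarith [sq_nonneg ((f u - f v) - (η u - η v)), sq_nonneg (η u + η v)]
    have hA : (∑' e', Lf e') < ⊤ := by
      have hcg : ∀ e' : G.edgeSet, Lf e' = ENNReal.ofReal 2 *
          ENNReal.ofReal
            (Sym2.lift ⟨fun u v => (f u - f v) ^ 2, fun u v => by ring⟩ (e' : Sym2 V)) := by
        intro e'
        simp only [hLf]
        rw [ENNReal.ofReal_mul (by norm_num : (0:ℝ) ≤ 2)]
      calc (∑' e', Lf e') = ENNReal.ofReal 2 * dirichletEnergy G f := by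
            unfold dirichletEnergy
            rw [← ENNReal.tsum_mul_left]
            exact tsum_congr hcg
        _ < ⊤ := ENNReal.mul_lt_top ENNReal.ofReal_lt_top hfen
    -- darts machinery for the η-part
    have hde : ∀ e' : G.edgeSet, ∃ dd : G.Dart, dd.edge = (e' : Sym2 V) := by
      rintro ⟨e', he'⟩
      induction e' using Sym2.inductionOn with
      | hf u v => exact ⟨⟨(u, v), he'⟩, rfl⟩
    choose DD hDD using hde
    set ψ : G.Dart → ℝ≥0∞ := fun dd => ENNReal.ofReal (4 * η dd.fst ^ 2) with hψ
    set ι : G.edgeSet × Bool → G.Dart := fun p => if p.2 then DD p.1 else (DD p.1).symm with hι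
    have hιedge : ∀ p : G.edgeSet × Bool, (ι p).edge = (p.1 : Sym2 V) := by
      rintro ⟨e₁, b⟩
      cases b <;> simp [hι, SimpleGraph.Dart.edge_symm, hDD]
    have hιinj : Function.Injective ι := by
      rintro ⟨e₁, b₁⟩ ⟨e₂, b₂⟩ hp
      have he12 : e₁ = e₂ := by
        apply Subtype.ext
        rw [← hιedge (e₁, b₁), ← hιedge (e₂, b₂), hp]
      subst he12
      have hne : DD e₁ ≠ (DD e₁).symm := by
        intro hh
        have h1 : (DD e₁).fst = (DD e₁).snd := by
          have := congrArg (fun d : G.Dart => d.toProd.1) hh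
          simpa using this
        exact (DD e₁).fst_ne_snd h1
      have hft : ι (e₁, false) = (DD e₁).symm := by simp [hι]
      have htt : ι (e₁, true) = DD e₁ := by simp [hι]
      have hb : b₁ = b₂ := by
        cases b₁ <;> cases b₂
        · rfl
        · rw [hft, htt] at hp; exact absurd hp.symm hne
        · rw [hft, htt] at hp; exact absurd hp hne
        · rfl
      rw [hb]
    have hedgeval : ∀ e' : G.edgeSet, Lη e' = ψ (DD e') + ψ (DD e').symm := by
      intro e'
      have h1 : (e' : Sym2 V) = s((DD e').fst, (DD e').snd) := (hDD e').symm
      have h2 : (DD e').symm.fst = (DD e').snd := rfl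
      simp only [hLη, hψ, h2]
      rw [h1, Sym2.lift_mk, ENNReal.ofReal_add (by positivity) (by positivity)]
    have hB : (∑' e', Lη e') < ⊤ := by
      have hstep1 : (∑' e', Lη e') = ∑' p : G.edgeSet × Bool, ψ (ι p) := by
        rw [ENNReal.tsum_prod']
        refine tsum_congr fun e' => ?_
        rw [tsum_fintype, Fintype.sum_bool]
        have ht : ι (e', true) = DD e' := rfl
        have hf' : ι (e', false) = (DD e').symm := rfl
        rw [ht, hf', hedgeval e']
      have hstep2 : (∑' p : G.edgeSet × Bool, ψ (ι p)) ≤ ∑' dd : G.Dart, ψ dd :=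
        ENNReal.tsum_comp_le_tsum_of_injective hιinj ψ
      have hjinj : Function.Injective
          (fun dd : G.Dart => (⟨dd.fst, dd.snd, dd.adj⟩ : Σ v : V, G.neighborSet v)) := by
        intro d₁ d₂ hd
        have h1 : d₁.fst = d₂.fst := congrArg Sigma.fst hd
        have h2 : d₁.snd = d₂.snd :=
          congrArg (fun s : Σ v : V, G.neighborSet v => (s.2 : V)) hd
        exact SimpleGraph.Dart.ext _ _ (Prod.ext h1 h2)
      have hstep3 : (∑' dd : G.Dart, ψ dd) ≤
          ∑' s : Σ v : V, G.neighborSet v, ENNReal.ofReal (4 * η s.1 ^ 2) :=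
        ENNReal.tsum_comp_le_tsum_of_injective hjinj _
      have hstep4 : (∑' s : Σ v : V, G.neighborSet v, ENNReal.ofReal (4 * η s.1 ^ 2))
          = ∑' v : V, (D v : ℝ≥0∞) * ENNReal.ofReal (4 * η v ^ 2) := by
        rw [ENNReal.tsum_sigma']
        refine tsum_congr fun v => ?_
        letI : Fintype (G.neighborSet v) := (hlf v).fintype
        rw [tsum_fintype]
        simp only [Finset.sum_const, Finset.card_univ, nsmul_eq_mul]
        congr 1
        simp [hDdef, Nat.card_eq_fintype_card]
      have hstep5 : (∑' v : V, (D v : ℝ≥0∞) * ENNReal.ofReal (4 * η v ^ 2))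
          = ∑' n : ℕ, (D (e n) : ℝ≥0∞) * ENNReal.ofReal (4 * η (e n) ^ 2) :=
        (e.tsum_eq _).symm
      have hterm : ∀ n : ℕ, (D (e n) : ℝ≥0∞) * ENNReal.ofReal (4 * η (e n) ^ 2)
          ≤ ENNReal.ofReal (4 * ((1 / 2 : ℝ) ^ n) ^ 2) := by
        intro n
        rw [← ENNReal.ofReal_natCast (D (e n)), ← ENNReal.ofReal_mul (by positivity)]
        apply ENNReal.ofReal_le_ofReal
        have hη : η (e n) = t * ε n := by simp [hηdef]
        rw [hη, hεdef]
        have hDle : (D (e n) : ℝ) ≤ (M n : ℝ) := by exact_mod_cast hDM n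
        have hM := hMpos n
        have hMge1 : (1 : ℝ) ≤ (M n : ℝ) := by exact_mod_cast hM1 n
        have hDnn : (0 : ℝ) ≤ (D (e n) : ℝ) := Nat.cast_nonneg _
        have hfrac : (D (e n) : ℝ) * t ^ 2 / (M n : ℝ) ^ 2 ≤ 1 := by
          rw [div_le_one (by positivity)]
          have ht2 : t ^ 2 ≤ 1 := by nlinarith
          calc (D (e n) : ℝ) * t ^ 2 ≤ (M n : ℝ) * t ^ 2 := by nlinarith
            _ ≤ (M n : ℝ) * 1 := by nlinarith
            _ ≤ (M n : ℝ) * (M n : ℝ) := by nlinarith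
            _ = (M n : ℝ) ^ 2 := (sq _).symm
        have hkey : (D (e n) : ℝ) * (4 * (t * ((1 / 2 : ℝ) ^ n / (M n : ℝ))) ^ 2)
            = 4 * ((1 / 2 : ℝ) ^ n) ^ 2 * ((D (e n) : ℝ) * t ^ 2 / (M n : ℝ) ^ 2) := by
          field_simp
        rw [hkey]
        have hpn : (0 : ℝ) ≤ 4 * ((1 / 2 : ℝ) ^ n) ^ 2 := by positivity
        nlinarith
      have hsum : (∑' n : ℕ, ENNReal.ofReal (4 * ((1 / 2 : ℝ) ^ n) ^ 2)) < ⊤ := by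
        have hsummable : Summable (fun n : ℕ => 4 * ((1 / 2 : ℝ) ^ n) ^ 2) := by
          have heq : (fun n : ℕ => 4 * ((1 / 2 : ℝ) ^ n) ^ 2)
              = fun n => 4 * (1 / 4 : ℝ) ^ n := by
            funext n
            rw [pow_right_comm]
            norm_num
          rw [heq]
          exact (summable_geometric_of_lt_one (by norm_num) (by norm_num)).mul_left 4
        rw [← ENNReal.ofReal_tsum_of_nonneg (fun n => by positivity) hsummable]
        exact ENNReal.ofReal_lt_top
      calc (∑' e', Lη e') = ∑' p : G.edgeSet × Bool, ψ (ι p) := hstep1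
        _ ≤ ∑' dd : G.Dart, ψ dd := hstep2
        _ ≤ ∑' s : Σ v : V, G.neighborSet v, ENNReal.ofReal (4 * η s.1 ^ 2) := hstep3
        _ = ∑' n : ℕ, (D (e n) : ℝ≥0∞) * ENNReal.ofReal (4 * η (e n) ^ 2) := by
            rw [hstep4, hstep5]
        _ ≤ ∑' n : ℕ, ENNReal.ofReal (4 * ((1 / 2 : ℝ) ^ n) ^ 2) :=
            ENNReal.tsum_le_tsum hterm
        _ < ⊤ := hsum
    exact lt_of_le_of_lt hsplit (ENNReal.add_lt_top.mpr ⟨hA, hB⟩)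
end
end

section
/- In the hyperbolic plane, there exist constants c ∈ (0,1) and C > 1 such that for any basepoint o and any two points p, q, the angular distance between the directions of p and q as seen from o satisfies d(θ(p), θ(q)) ≤ C · c^{dist(o,p) − dist(p,q)}. -/
open UpperHalfPlane Real

noncomputable section

/-- The angle at `o` between the geodesic segments `[o,p]` and `[o,q]` in the hyperbolic
plane (upper half-plane model), defined via the hyperbolic law of cosines:
`cosh d(p,q) = cosh d(o,p) cosh d(o,q) − sinh d(o,p) sinh d(o,q) cos ∠(p,o,q)`.
This equals the arclength distance on the unit circle of directions at `o` between the
directions `θ(p)` and `θ(q)` of `p` and `q` as seen from `o`. -/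
def hAngle (o p q : UpperHalfPlane) : ℝ :=
  Real.arccos ((Real.cosh (dist o p) * Real.cosh (dist o q) - Real.cosh (dist p q)) /
    (Real.sinh (dist o p) * Real.sinh (dist o q)))

/-- `arccos X ≤ π √((1-X)/2)` for `X ∈ [-1,1]`. -/
lemma arccos_le_sqrt' {X : ℝ} (h1 : -1 ≤ X) (h2 : X ≤ 1) :
    Real.arccos X ≤ π * Real.sqrt ((1 - X) / 2) := by
  set θ := Real.arccos X with hθ
  have h0 : 0 ≤ θ := Real.arccos_nonneg X
  have hπ : θ ≤ π := Real.arccos_le_pi X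
  have hcos : Real.cos θ = X := Real.cos_arccos h1 h2
  have hb : Real.cos θ ≤ 1 - 2 / π ^ 2 * θ ^ 2 :=
    Real.cos_le_one_sub_mul_cos_sq (by rw [abs_of_nonneg h0]; exact hπ)
  have hsq : θ ^ 2 ≤ π ^ 2 * ((1 - X) / 2) := by
    have hπ2 : (0:ℝ) < π ^ 2 := by positivity
    rw [hcos] at hb
    have key : 2 / π ^ 2 * θ ^ 2 ≤ 1 - X := by linarith
    have hid : π ^ 2 * (2 / π ^ 2 * θ ^ 2) = 2 * θ ^ 2 := by field_simp
    nlinarith [mul_le_mul_of_nonneg_left key hπ2.le]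
  calc θ = Real.sqrt (θ ^ 2) := by rw [Real.sqrt_sq h0]
    _ ≤ Real.sqrt (π ^ 2 * ((1 - X) / 2)) := Real.sqrt_le_sqrt hsq
    _ = π * Real.sqrt ((1 - X) / 2) := by
        rw [Real.sqrt_mul (by positivity), Real.sqrt_sq Real.pi_pos.le]

/-- `sinh x ≥ eˣ/4` for `x ≥ 1`. -/
lemma exp_div_four_le_sinh {x : ℝ} (hx : 1 ≤ x) : Real.exp x / 4 ≤ Real.sinh x := by
  have h1 : Real.exp (-x) ≤ 1 := by
    rw [show (1:ℝ) = Real.exp 0 by simp]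
    exact Real.exp_le_exp.2 (by linarith)
  have h2 : 2 ≤ Real.exp x := by
    have := Real.add_one_le_exp x; linarith
  rw [Real.sinh_eq]
  linarith

/-- in the hyperbolic plane there are constants `c ∈ (0,1)` and `C > 1`
such that for any basepoint `o` and any two points `p, q` (distinct from `o`), the
angular distance between the directions of `p` and `q` as seen from `o` satisfies
`d(θ(p), θ(q)) ≤ C · c^(dist(o,p) − dist(p,q))`. -/
theorem angle_le_exp_decay :
    ∃ c C : ℝ, 0 < c ∧ c < 1 ∧ 1 < C ∧
      ∀ o p q : UpperHalfPlane, p ≠ o → q ≠ o →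
        hAngle o p q ≤ C * c ^ (dist o p - dist p q) := by
  refine ⟨Real.exp (-1), π * Real.exp 2, Real.exp_pos _, ?_, ?_, ?_⟩
  · rw [show (1:ℝ) = Real.exp 0 by simp]
    exact Real.exp_lt_exp.2 (by norm_num)
  · nlinarith [Real.pi_gt_three, Real.add_one_le_exp (2:ℝ)]
  intro o p q hp hq
  set a := dist o p with hadef
  set b := dist o q with hbdef
  set d := dist p q with hddef
  have ha : 0 < a := dist_pos.2 (Ne.symm hp)
  have hb : 0 < b := dist_pos.2 (Ne.symm hq)
  have hd : 0 ≤ d := dist_nonneg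
  have habs : |a - b| ≤ d := by
    have := abs_dist_sub_le p q o
    rwa [dist_comm p o, dist_comm q o] at this
  have htri : d ≤ a + b := by
    have := dist_triangle p o q
    rwa [dist_comm p o] at this
  have hsa : 0 < Real.sinh a := Real.sinh_pos_iff.2 ha
  have hsb : 0 < Real.sinh b := Real.sinh_pos_iff.2 hb
  have hS : 0 < Real.sinh a * Real.sinh b := mul_pos hsa hsb
  set X := (Real.cosh a * Real.cosh b - Real.cosh d) / (Real.sinh a * Real.sinh b) with hX
  -- X ∈ [-1, 1]
  have hcsub : Real.cosh (a - b) ≤ Real.cosh d := by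
    rw [Real.cosh_le_cosh]
    rwa [abs_of_nonneg hd]
  have hcadd : Real.cosh d ≤ Real.cosh (a + b) := by
    rw [Real.cosh_le_cosh, abs_of_nonneg hd, abs_of_nonneg (by linarith : (0:ℝ) ≤ a + b)]
    exact htri
  have hX1 : X ≤ 1 := by
    rw [hX, div_le_one hS]
    have := Real.cosh_sub a b
    linarith
  have hX2 : -1 ≤ X := by
    rw [hX, le_div_iff₀ hS]
    have := Real.cosh_add a b
    linarith
  -- rewrite the rpow
  have hrpow : (Real.exp (-1)) ^ (a - d) = Real.exp (-(a - d)) := by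
    rw [Real.rpow_def_of_pos (Real.exp_pos _), Real.log_exp]
    ring_nf
  have hangle : hAngle o p q = Real.arccos X := rfl
  rw [hangle, hrpow]
  set t := a - d with htdef
  by_cases hcase : t ≤ 1
  · -- trivial bound: arccos ≤ π
    have h1 : Real.arccos X ≤ π := Real.arccos_le_pi X
    have h2 : Real.exp 2 * Real.exp (-t) = Real.exp (2 - t) := by
      rw [← Real.exp_add]; ring_nf
    have h3 : (1:ℝ) ≤ Real.exp (2 - t) := Real.one_le_exp (by linarith)
    calc Real.arccos X ≤ π := h1
      _ ≤ π * (Real.exp 2 * Real.exp (-t)) := by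
          rw [h2]; nlinarith [Real.pi_pos]
      _ = π * Real.exp 2 * Real.exp (-t) := by ring
  · push_neg at hcase
    have ha1 : 1 ≤ a := by
      have : t ≤ a := by simp only [htdef]; linarith
      linarith
    have hbt : t ≤ b := by
      have : a - b ≤ |a - b| := le_abs_self _
      simp only [htdef]; linarith
    have hb1 : 1 ≤ b := le_trans hcase.le hbt
    have hsha : Real.exp a / 4 ≤ Real.sinh a := exp_div_four_le_sinh ha1
    have hshb : Real.exp b / 4 ≤ Real.sinh b := exp_div_four_le_sinh hb1
    have hS16 : Real.exp (a + b) / 16 ≤ Real.sinh a * Real.sinh b := by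
      rw [Real.exp_add]
      nlinarith [Real.exp_pos a, Real.exp_pos b]
    -- 1 - X ≤ 16 exp(-2t)
    have hcd : Real.cosh d ≤ Real.exp d := by
      rw [Real.cosh_eq]
      have h1 : Real.exp (-d) ≤ 1 := by
        rw [show (1:ℝ) = Real.exp 0 by simp]
        exact Real.exp_le_exp.2 (by linarith)
      have h2 : 1 ≤ Real.exp d := Real.one_le_exp hd
      linarith
    have hexpd : Real.exp d ≤ Real.exp (-(2*t)) * Real.exp (a + b) := by
      rw [← Real.exp_add]
      apply Real.exp_le_exp.2
      have : a - b ≤ |a - b| := le_abs_self _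
      simp only [htdef]; linarith [abs_le.1 habs]
    have h1X : 1 - X ≤ 16 * Real.exp (-(2*t)) := by
      have hnum : (1 : ℝ) - X = (Real.sinh a * Real.sinh b -
          (Real.cosh a * Real.cosh b - Real.cosh d)) / (Real.sinh a * Real.sinh b) := by
        rw [hX]; field_simp
      rw [hnum, div_le_iff₀ hS]
      have hcoshsub := Real.cosh_sub a b
      have hpos : 0 < Real.cosh (a - b) := Real.cosh_pos _
      have hstep : Real.sinh a * Real.sinh b - (Real.cosh a * Real.cosh b - Real.cosh d)
          = Real.cosh d - Real.cosh (a - b) := by linarith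
      rw [hstep]
      have h16 : Real.exp (-(2*t)) * Real.exp (a + b) ≤
          16 * Real.exp (-(2*t)) * (Real.sinh a * Real.sinh b) := by
        have := mul_le_mul_of_nonneg_left hS16 (by positivity : (0:ℝ) ≤ 16 * Real.exp (-(2*t)))
        calc Real.exp (-(2*t)) * Real.exp (a + b)
            = 16 * Real.exp (-(2*t)) * (Real.exp (a+b) / 16) := by ring
          _ ≤ 16 * Real.exp (-(2*t)) * (Real.sinh a * Real.sinh b) := this
      linarith [hcd.trans hexpd]
    -- conclude
    have hsqrt : Real.sqrt ((1 - X) / 2) ≤ 3 * Real.exp (-t) := by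
      have hE : Real.exp (-(2*t)) = (Real.exp (-t)) ^ 2 := by
        rw [sq, ← Real.exp_add]; ring_nf
      have h8 : (1 - X) / 2 ≤ 9 * (Real.exp (-t)) ^ 2 := by
        rw [← hE]; linarith [Real.exp_pos (-(2*t))]
      calc Real.sqrt ((1 - X) / 2) ≤ Real.sqrt (9 * (Real.exp (-t)) ^ 2) :=
            Real.sqrt_le_sqrt h8
        _ = 3 * Real.exp (-t) := by
            rw [Real.sqrt_mul (by norm_num), Real.sqrt_sq (Real.exp_pos _).le,
              show (9:ℝ) = 3^2 by norm_num, Real.sqrt_sq (by norm_num)]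
    have h3e : (3:ℝ) ≤ Real.exp 2 := by linarith [Real.add_one_le_exp (2:ℝ)]
    calc Real.arccos X ≤ π * Real.sqrt ((1 - X) / 2) := arccos_le_sqrt' hX2 hX1
      _ ≤ π * (3 * Real.exp (-t)) := by
          apply mul_le_mul_of_nonneg_left hsqrt Real.pi_pos.le
      _ = 3 * (π * Real.exp (-t)) := by ring
      _ ≤ Real.exp 2 * (π * Real.exp (-t)) := by
          apply mul_le_mul_of_nonneg_right h3e
          positivity
      _ = π * Real.exp 2 * Real.exp (-t) := by ring
end
end

section
/- The function λ ↦ p_c(λ) for Poisson–Voronoi–Bernoulli percolation in the hyperbolic plane is continuous on (0,∞); more precisely, for all 0 < λ ≤ λ′, one has p_c(λ)·(λ/λ′) ≤ p_c(λ′) ≤ 1 − (1 − p_c(λ))·(λ/λ′). -/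
/-!
Measure the critical point in terms of the white intensity: `w_c(λ) = λ · p_c(λ)` is the least
white intensity `w ∈ [0, λ]` that percolates against black intensity `λ - w`. Adding black
nuclei cannot help white, so `w_c` is nondecreasing; adding white nuclei cannot hurt white, so
the critical black intensity `λ - w_c(λ)` is nondecreasing as well. Dividing by `λ′` gives the
sandwich, and the two monotonicities make `w_c` `1`-Lipschitz, hence `p_c = w_c / λ` continuous.
-/

open Set

noncomputable section

/-- In `(p,λ)`-Poisson–Voronoi–Bernoulli percolation on the hyperbolic plane, white and
black nuclei are independent Poisson processes with intensities `λ_W = p·λ` and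
`λ_B = (1−p)·λ`.  Here `θ λ_W λ_B` denotes the probability that a fixed point lies in an
unbounded white component; `(p,λ) ∈ 𝒲` iff this probability is positive.  The critical
parameter `p_c(λ)` is the infimum of the `p ∈ [0,1]` for which white percolation occurs. -/
def pcVor (θ : ℝ → ℝ → ℝ) (lam : ℝ) : ℝ :=
  sInf {p : ℝ | p ∈ Icc (0 : ℝ) 1 ∧ 0 < θ (p * lam) ((1 - p) * lam)}

open Pointwise

theorem LipschitzOnWith.one_of_monotoneOn_of_monotoneOn_sub {f : ℝ → ℝ} {s : Set ℝ}
    (hf : MonotoneOn f s) (hsub : MonotoneOn (fun x => x - f x) s) :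
    LipschitzOnWith 1 f s := by
  refine LipschitzOnWith.of_le_add fun x hx y hy => ?_
  rw [Real.dist_eq]
  rcases le_total x y with hxy | hyx
  · linarith [hf hx hy hxy, abs_nonneg (x - y)]
  · linarith [hsub hy hx hyx, le_abs_self (x - y)]

namespace PoissonVoronoi

variable (θ : ℝ → ℝ → ℝ)

def percolatingParams (lam : ℝ) : Set ℝ :=
  {p | p ∈ Icc (0 : ℝ) 1 ∧ 0 < θ (p * lam) ((1 - p) * lam)}

def percolatingWhiteIntensities (lam : ℝ) : Set ℝ :=
  {w | w ∈ Icc 0 lam ∧ 0 < θ w (lam - w)}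

def critWhiteIntensity (lam : ℝ) : ℝ :=
  sInf (percolatingWhiteIntensities θ lam)

variable {θ}

theorem smul_percolatingParams {lam : ℝ} (hlam : 0 < lam) :
    lam • percolatingParams θ lam = percolatingWhiteIntensities θ lam := by
  ext w
  simp only [percolatingParams, percolatingWhiteIntensities, mem_smul_set, mem_ofPred_eq,
    mem_Icc, smul_eq_mul]
  constructor
  · rintro ⟨p, ⟨⟨hp0, hp1⟩, hθ⟩, rfl⟩
    refine ⟨⟨by positivity, by nlinarith⟩, ?_⟩
    convert hθ using 2 <;> ring
  · rintro ⟨⟨hw0, hwlam⟩, hθ⟩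
    refine ⟨w / lam, ⟨⟨by positivity, (div_le_one hlam).2 hwlam⟩, ?_⟩, by field_simp⟩
    convert hθ using 2 <;> field_simp

theorem pcVor_eq_critWhiteIntensity_div {lam : ℝ} (hlam : 0 < lam) :
    pcVor θ lam = critWhiteIntensity θ lam / lam := by
  rw [critWhiteIntensity, ← smul_percolatingParams hlam, Real.sInf_smul_of_nonneg hlam.le,
    smul_eq_mul, mul_div_cancel_left₀ _ hlam.ne']
  rfl

theorem bddBelow_percolatingWhiteIntensities (lam : ℝ) :
    BddBelow (percolatingWhiteIntensities θ lam) :=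
  ⟨0, fun _ hw => hw.1.1⟩

theorem critWhiteIntensity_le_self {lam : ℝ}
    (hne : (percolatingWhiteIntensities θ lam).Nonempty) : critWhiteIntensity θ lam ≤ lam :=
  let ⟨_, hw⟩ := hne
  (csInf_le (bddBelow_percolatingWhiteIntensities lam) hw).trans hw.1.2

theorem critWhiteIntensity_mono (hB : ∀ a : ℝ, Antitone fun b => θ a b) {a b : ℝ}
    (ha : (percolatingWhiteIntensities θ a).Nonempty)
    (hb : (percolatingWhiteIntensities θ b).Nonempty) (hab : a ≤ b) :
    critWhiteIntensity θ a ≤ critWhiteIntensity θ b := by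
  refine le_csInf hb fun w ⟨⟨hw0, _⟩, hθ⟩ => ?_
  rcases le_or_gt w a with hwa | haw
  · have hθa : θ w (b - w) ≤ θ w (a - w) := hB w (by linarith)
    exact csInf_le (bddBelow_percolatingWhiteIntensities a)
      ⟨⟨hw0, hwa⟩, hθ.trans_le hθa⟩
  · exact (critWhiteIntensity_le_self ha).trans haw.le

/-- If `w` percolates at total intensity `a`, then `w + (b - a)` percolates at `b`: the black
intensity `a - w` is unchanged and the white one has grown. -/
theorem sub_critWhiteIntensity_mono (hW : ∀ b : ℝ, Monotone fun a => θ a b) {a b : ℝ}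
    (ha : (percolatingWhiteIntensities θ a).Nonempty) (hab : a ≤ b) :
    a - critWhiteIntensity θ a ≤ b - critWhiteIntensity θ b := by
  suffices critWhiteIntensity θ b - (b - a) ≤ critWhiteIntensity θ a by linarith
  refine le_csInf ha fun w ⟨⟨hw0, hwa⟩, hθ⟩ => sub_le_iff_le_add.2 ?_
  have hθb : θ w (a - w) ≤ θ (w + (b - a)) (b - (w + (b - a))) := by
    rw [show b - (w + (b - a)) = a - w by ring]
    exact hW (a - w) (by linarith)
  exact csInf_le (bddBelow_percolatingWhiteIntensities b)
    ⟨⟨by linarith, by linarith⟩, hθ.trans_le hθb⟩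

end PoissonVoronoi

open PoissonVoronoi in
/-- the function `λ ↦ p_c(λ)` for Poisson–Voronoi–Bernoulli percolation in
the hyperbolic plane is continuous on `(0,∞)`; more precisely, for `0 < λ ≤ λ′`,
`p_c(λ)·(λ/λ′) ≤ p_c(λ′) ≤ 1 − (1 − p_c(λ))·(λ/λ′)`.

As permitted by the context, the Poisson-superposition monotonicity of
`θ(λ_W, λ_B)` (nondecreasing in `λ_W`, nonincreasing in `λ_B`) is taken as given,
together with the (true in the model, e.g. `p = 1`) nondegeneracy that for every
intensity `λ > 0` some `p ∈ [0,1]` percolates. -/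
theorem pcVor_sandwich_and_continuous
    (θ : ℝ → ℝ → ℝ)
    (hW : ∀ b : ℝ, Monotone fun a => θ a b)
    (hB : ∀ a : ℝ, Antitone fun b => θ a b)
    (hne : ∀ lam : ℝ, 0 < lam →
      ∃ p, p ∈ Icc (0 : ℝ) 1 ∧ 0 < θ (p * lam) ((1 - p) * lam)) :
    (∀ lam lam' : ℝ, 0 < lam → lam ≤ lam' →
        pcVor θ lam * (lam / lam') ≤ pcVor θ lam' ∧
        pcVor θ lam' ≤ 1 - (1 - pcVor θ lam) * (lam / lam')) ∧
    ContinuousOn (pcVor θ) (Ioi (0 : ℝ)) := by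
  have hne' : ∀ lam, 0 < lam → (percolatingWhiteIntensities θ lam).Nonempty := fun lam hlam =>
    smul_percolatingParams hlam ▸
      (show (percolatingParams θ lam).Nonempty from hne lam hlam).smul_set
  have hmono : MonotoneOn (critWhiteIntensity θ) (Ioi 0) := fun a ha b hb hab =>
    critWhiteIntensity_mono hB (hne' a ha) (hne' b hb) hab
  have hmono_sub : MonotoneOn (fun lam => lam - critWhiteIntensity θ lam) (Ioi 0) :=
    fun a ha _ _ hab => sub_critWhiteIntensity_mono hW (hne' a ha) hab
  refine ⟨fun a b ha hab => ?_, ?_⟩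
  · have hb : 0 < b := ha.trans_le hab
    rw [pcVor_eq_critWhiteIntensity_div ha, pcVor_eq_critWhiteIntensity_div hb]
    constructor
    · calc critWhiteIntensity θ a / a * (a / b) = critWhiteIntensity θ a / b := by field_simp
        _ ≤ critWhiteIntensity θ b / b := by gcongr; exact hmono ha hb hab
    · calc critWhiteIntensity θ b / b = 1 - (b - critWhiteIntensity θ b) / b := by
            field_simp; ring
        _ ≤ 1 - (a - critWhiteIntensity θ a) / b := by
            gcongr 1 - ?_ / _; exact hmono_sub ha hb hab
        _ = 1 - (1 - critWhiteIntensity θ a / a) * (a / b) := by field_simp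
  · have hlip := LipschitzOnWith.one_of_monotoneOn_of_monotoneOn_sub hmono hmono_sub
    exact (hlip.continuousOn.div continuousOn_id fun _ h => ne_of_gt h).congr fun _ h =>
      pcVor_eq_critWhiteIntensity_div h
end
end
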